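/- arXiv:1805.00887 — 3 statements merged into one kernel-verified Lean document; each statement's English description precedes it below -/
import Mathlib

section
/- Let (X,d) be a compact metric space and 𝕀 = {S_1,...,S_N} an IFS of bi-Lipschitz contractions on X, and let t > s_1, where s_1 solves ∑_{i=1}^N Lip⁺(S_i)^{s_1} = 1. Then for all δ ∈ (0,1], the δ-stopping satisfies |I(δ)| ≤ b_t · L_min^{−t} · δ^{−t}, where b_t = ∑_{𝐢∈I*} Lip⁺(S_𝐢)^t and L_min = min_{i∈I} Lip⁻(S_i). -/
open Metric Filter Set MeasureTheory Topology

/-- The upper Lipschitz constant `Lip⁺(S) = sup_{x ≠ y} d(S x, S y)/d(x,y)`. -/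
noncomputable def LipPlus {X : Type*} [MetricSpace X] (S : X → X) : ℝ :=
  sSup {r : ℝ | ∃ x y : X, x ≠ y ∧ r = dist (S x) (S y) / dist x y}

/-- The lower Lipschitz constant `Lip⁻(S) = inf_{x ≠ y} d(S x, S y)/d(x,y)`. -/
noncomputable def LipMinus {X : Type*} [MetricSpace X] (S : X → X) : ℝ :=
  sInf {r : ℝ | ∃ x y : X, x ≠ y ∧ r = dist (S x) (S y) / dist x y}

/-- `S` is a bi-Lipschitz contraction: `0 < Lip⁻(S) ≤ Lip⁺(S) < 1`,
with `Lip⁺(S)` and `Lip⁻(S)` genuine upper/lower Lipschitz bounds. -/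
def IsBiLipContraction {X : Type*} [MetricSpace X] (S : X → X) : Prop :=
  (∀ x y : X, dist (S x) (S y) ≤ LipPlus S * dist x y) ∧
  (∀ x y : X, LipMinus S * dist x y ≤ dist (S x) (S y)) ∧
  0 < LipMinus S ∧ LipMinus S ≤ LipPlus S ∧ LipPlus S < 1

/-- `S_𝐢 = S_{i₁} ∘ ⋯ ∘ S_{i_k}` for a finite word `𝐢` over `{1,…,N}`. -/
def compList {X : Type*} {N : ℕ} (S : Fin N → X → X) : List (Fin N) → X → X
  | [] => id
  | i :: w => S i ∘ compList S w

/-- `Lip⁺(S_𝐢)`, with the convention `Lip⁺(S_ω) = 1` for the empty word `ω`. -/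
noncomputable def lipWord {X : Type*} [MetricSpace X] {N : ℕ} (S : Fin N → X → X)
    (w : List (Fin N)) : ℝ :=
  if w = [] then 1 else LipPlus (compList S w)

/-- The `δ`-stopping `I(δ) = {𝐢 ∈ I* : Lip⁺(S_𝐢) < δ ≤ Lip⁺(S_𝐢₋)}`. -/
noncomputable def stopping {X : Type*} [MetricSpace X] {N : ℕ} (S : Fin N → X → X)
    (δ : ℝ) : Set (List (Fin N)) :=
  {w | w ≠ [] ∧ lipWord S w < δ ∧ δ ≤ lipWord S w.dropLast}

/-! For `𝐢 ∈ I(δ)` the prefix `𝐢₋` lies in `D = {𝐮 : δ ≤ Lip⁺(S_𝐮)}`, so `|I(δ)| ≤ N |D|`, while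
`|D| δ^t ≤ ∑_𝐮 Lip⁺(S_𝐮)^t = 1 + b_t`, the sum running over all words including `ω`; it converges
since `Lip⁺(S_𝐮) ≤ ∏ⱼ Lip⁺(S_{uⱼ})` and `∑ᵢ Lip⁺(Sᵢ)^t < 1`. Splitting off the *first* letter,
`Lip⁺(Sᵢ ∘ S_𝐮) ≥ Lip⁻(Sᵢ) Lip⁺(S_𝐮)`, gives `b_t ≥ N L_min^t (1 + b_t)`, hence
`|I(δ)| L_min^t δ^t ≤ N L_min^t (1 + b_t) ≤ b_t`. (Splitting off the last letter would not work:
`Sᵢ` need not be onto, so `Lip⁺(F ∘ Sᵢ)` may be smaller than `Lip⁺(F) Lip⁻(Sᵢ)`.) -/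

section LipschitzConstants

variable {X : Type*} [MetricSpace X]

lemma bddAbove_dist_div_dist {f : X → X} {K : ℝ} (h : ∀ x y, dist (f x) (f y) ≤ K * dist x y) :
    BddAbove {r : ℝ | ∃ x y : X, x ≠ y ∧ r = dist (f x) (f y) / dist x y} :=
  ⟨K, by rintro r ⟨x, y, hxy, rfl⟩; exact (div_le_iff₀ (dist_pos.2 hxy)).2 (h x y)⟩

lemma lipPlus_nonneg (f : X → X) : 0 ≤ LipPlus f :=
  Real.sSup_nonneg (by rintro r ⟨x, y, -, rfl⟩; positivity)

lemma lipPlus_le {f : X → X} {K : ℝ} (hK : 0 ≤ K)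
    (h : ∀ x y, dist (f x) (f y) ≤ K * dist x y) : LipPlus f ≤ K :=
  Real.sSup_le (by rintro r ⟨x, y, hxy, rfl⟩; exact (div_le_iff₀ (dist_pos.2 hxy)).2 (h x y)) hK

lemma mul_lipPlus_le_lipPlus_comp {g F : X → X} {k K : ℝ} (hk : 0 ≤ k)
    (hg : ∀ x y, k * dist x y ≤ dist (g x) (g y))
    (hgF : ∀ x y, dist (g (F x)) (g (F y)) ≤ K * dist x y) :
    k * LipPlus F ≤ LipPlus (g ∘ F) := by
  rw [LipPlus, ← smul_eq_mul, ← Real.sSup_smul_of_nonneg hk]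
  refine Real.sSup_le ?_ (lipPlus_nonneg _)
  rintro _ ⟨_, ⟨x, y, hxy, rfl⟩, rfl⟩
  calc k • (dist (F x) (F y) / dist x y) ≤ dist (g (F x)) (g (F y)) / dist x y := by
        rw [smul_eq_mul, ← mul_div_assoc]
        gcongr
        exact hg _ _
    _ ≤ LipPlus (g ∘ F) := le_csSup (bddAbove_dist_div_dist hgF) ⟨x, y, hxy, rfl⟩

end LipschitzConstants

section Words

variable {X : Type*} [MetricSpace X] {N : ℕ} {S : Fin N → X → X}

lemma dist_compList_le (hS : ∀ i x y, dist (S i x) (S i y) ≤ LipPlus (S i) * dist x y)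
    (w : List (Fin N)) (x y : X) :
    dist (compList S w x) (compList S w y) ≤ (w.map fun i => LipPlus (S i)).prod * dist x y := by
  induction w with
  | nil => simp [compList]
  | cons i w ih =>
    simp only [compList, List.map_cons, List.prod_cons, mul_assoc]
    exact (hS i _ _).trans (mul_le_mul_of_nonneg_left ih (lipPlus_nonneg _))

lemma lipWord_nil : lipWord S [] = 1 := if_pos rfl

lemma lipWord_of_ne_nil {w : List (Fin N)} (hw : w ≠ []) :
    lipWord S w = LipPlus (compList S w) := if_neg hw

lemma lipWord_nonneg (w : List (Fin N)) : 0 ≤ lipWord S w := by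
  unfold lipWord
  split_ifs
  exacts [zero_le_one, lipPlus_nonneg _]

lemma lipWord_le_prod (hS : ∀ i x y, dist (S i x) (S i y) ≤ LipPlus (S i) * dist x y)
    (w : List (Fin N)) : lipWord S w ≤ (w.map fun i => LipPlus (S i)).prod := by
  rcases eq_or_ne w [] with rfl | hw
  · simp [lipWord_nil]
  · rw [lipWord_of_ne_nil hw]
    exact lipPlus_le (List.prod_nonneg (by simp [lipPlus_nonneg])) (dist_compList_le hS w)

lemma lipMinus_mul_lipWord_le_lipWord_cons (hS : ∀ i, IsBiLipContraction (S i))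
    (i : Fin N) (w : List (Fin N)) : LipMinus (S i) * lipWord S w ≤ lipWord S (i :: w) := by
  rw [lipWord_of_ne_nil (List.cons_ne_nil i w)]
  rcases eq_or_ne w [] with rfl | hw
  · simpa [lipWord_nil, compList] using (hS i).2.2.2.1
  · rw [lipWord_of_ne_nil hw]
    exact mul_lipPlus_le_lipPlus_comp (hS i).2.2.1.le (hS i).2.1
      (dist_compList_le (fun j => (hS j).1) (i :: w))

end Words

lemma summable_list_prod_map {ι : Type*} [Fintype ι] {m : ι → ℝ} (hm : ∀ i, 0 ≤ m i)
    (hm1 : ∑ i, m i < 1) : Summable fun w : List ι => (w.map m).prod := by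
  have htuple : Summable fun p : Σ n, Fin n → ι => ∏ j, m (p.2 j) := by
    refine (summable_sigma_of_nonneg fun p => Finset.prod_nonneg fun j _ => hm _).2
      ⟨fun n => .of_finite, ?_⟩
    refine (summable_geometric_of_lt_one (Finset.sum_nonneg fun i _ => hm i) hm1).congr
      fun n => ?_
    rw [tsum_fintype, Fintype.sum_pow]
  refine (List.equivSigmaTuple.summable_iff.2 htuple).congr fun w => ?_
  conv_rhs => rw [← List.ofFn_get w]
  rw [List.map_ofFn, List.prod_ofFn]
  rfl

section Exponents

variable {ι : Type*} [Fintype ι] {a : ι → ℝ}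

lemma nonneg_of_sum_rpow_eq_one (ha0 : ∀ i, 0 < a i) (ha1 : ∀ i, a i < 1) {s : ℝ}
    (hs : ∑ i, a i ^ s = 1) : 0 ≤ s := by
  obtain ⟨i, -⟩ := Finset.nonempty_of_sum_ne_zero (hs ▸ one_ne_zero)
  by_contra! hneg
  have hgt : 1 < a i ^ s := Real.one_lt_rpow_of_pos_of_lt_one_of_neg (ha0 i) (ha1 i) hneg
  have hle : a i ^ s ≤ ∑ j, a j ^ s :=
    Finset.single_le_sum (fun j _ => (Real.rpow_pos_of_pos (ha0 j) s).le) (Finset.mem_univ i)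
  linarith

lemma sum_rpow_lt_one_of_lt (ha0 : ∀ i, 0 < a i) (ha1 : ∀ i, a i < 1) {s t : ℝ}
    (hs : ∑ i, a i ^ s = 1) (hst : s < t) : ∑ i, a i ^ t < 1 := by
  rw [← hs]
  exact Finset.sum_lt_sum_of_nonempty (Finset.nonempty_of_sum_ne_zero (hs ▸ one_ne_zero))
    fun i _ => Real.rpow_lt_rpow_of_exponent_gt (ha0 i) (ha1 i) hst

end Exponents

lemma Summable.finite_setOf_le {α : Type*} {f : α → ℝ} (hf : Summable f) {ε : ℝ} (hε : 0 < ε) :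
    {a | ε ≤ f a}.Finite := by
  simpa only [not_lt] using
    Filter.eventually_cofinite.1 (hf.tendsto_cofinite_zero.eventually (gt_mem_nhds hε))

lemma Set.Finite.ncard_mul_le_tsum {α : Type*} {f : α → ℝ} (hf : Summable f)
    (hf0 : ∀ a, 0 ≤ f a) {s : Set α} (hs : s.Finite) {ε : ℝ} (hε : ∀ a ∈ s, ε ≤ f a) :
    s.ncard * ε ≤ ∑' a, f a := by
  rw [Set.ncard_eq_toFinset_card s hs]
  calc (hs.toFinset.card : ℝ) * ε = ∑ _a ∈ hs.toFinset, ε := by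
        rw [Finset.sum_const, nsmul_eq_mul]
    _ ≤ ∑ a ∈ hs.toFinset, f a := Finset.sum_le_sum fun a ha => hε a (hs.mem_toFinset.1 ha)
    _ ≤ ∑' a, f a := hf.sum_le_tsum _ fun a _ => hf0 a

def List.consEquivNeNil (α : Type*) : α × List α ≃ {w : List α // w ≠ []} where
  toFun p := ⟨p.1 :: p.2, List.cons_ne_nil _ _⟩
  invFun w := (w.1.head w.2, w.1.tail)
  left_inv _ := rfl
  right_inv w := Subtype.ext (List.cons_head_tail w.2)

section Stopping

variable {X : Type*} [MetricSpace X] {N : ℕ} {S : Fin N → X → X} {t δ : ℝ}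

lemma summable_lipWord_rpow (hS : ∀ i x y, dist (S i x) (S i y) ≤ LipPlus (S i) * dist x y)
    (ht : 0 ≤ t) (h1 : ∑ i, LipPlus (S i) ^ t < 1) : Summable fun w => lipWord S w ^ t := by
  refine .of_nonneg_of_le (fun w => Real.rpow_nonneg (lipWord_nonneg w) t) (fun w => ?_)
    (summable_list_prod_map (fun i => Real.rpow_nonneg (lipPlus_nonneg _) t) h1)
  rw [Real.list_prod_map_rpow' _ _ (fun i _ => lipPlus_nonneg (S i))]
  exact Real.rpow_le_rpow (lipWord_nonneg w) (lipWord_le_prod hS w) ht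

lemma finite_setOf_le_lipWord (hf : Summable fun w => lipWord S w ^ t) (ht : 0 ≤ t)
    (hδ : 0 < δ) : {w | δ ≤ lipWord S w}.Finite :=
  (hf.finite_setOf_le (Real.rpow_pos_of_pos hδ t)).subset fun _ hw =>
    Real.rpow_le_rpow hδ.le hw ht

lemma stopping_subset_image :
    stopping S δ ⊆
      (fun p : List (Fin N) × Fin N => p.1 ++ [p.2]) '' ({u | δ ≤ lipWord S u} ×ˢ univ) :=
  fun w ⟨hw, _, hδ⟩ =>
    ⟨(w.dropLast, w.getLast hw), ⟨hδ, trivial⟩, List.dropLast_append_getLast hw⟩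

lemma stopping_finite_and_ncard_le (hD : {u | δ ≤ lipWord S u}.Finite) :
    (stopping S δ).Finite ∧ (stopping S δ).ncard ≤ {u | δ ≤ lipWord S u}.ncard * N := by
  have himage := (hD.prod finite_univ).image fun p : List (Fin N) × Fin N => p.1 ++ [p.2]
  refine ⟨himage.subset stopping_subset_image, ?_⟩
  calc (stopping S δ).ncard ≤ _ := Set.ncard_le_ncard stopping_subset_image himage
    _ ≤ _ := Set.ncard_image_le (hD.prod finite_univ)
    _ = _ := by rw [Set.ncard_prod, Set.ncard_univ, Nat.card_fin]

lemma card_mul_rpow_mul_tsum_le (hS : ∀ i, IsBiLipContraction (S i)) {L : ℝ} (ht : 0 ≤ t)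
    (hL : 0 ≤ L) (hLS : ∀ i, L ≤ LipMinus (S i)) (hf : Summable fun w => lipWord S w ^ t) :
    N * L ^ t * ∑' w, lipWord S w ^ t ≤
      ∑' w : {w : List (Fin N) // w ≠ []}, LipPlus (compList S w.1) ^ t := by
  have hcons (p : Fin N × List (Fin N)) :
      L ^ t * lipWord S p.2 ^ t ≤ lipWord S (p.1 :: p.2) ^ t := by
    rw [← Real.mul_rpow hL (lipWord_nonneg _)]
    refine Real.rpow_le_rpow (mul_nonneg hL (lipWord_nonneg _)) ?_ ht
    exact (mul_le_mul_of_nonneg_right (hLS p.1) (lipWord_nonneg _)).trans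
      (lipMinus_mul_lipWord_le_lipWord_cons hS p.1 p.2)
  have hf_cons : Summable fun p : Fin N × List (Fin N) => lipWord S (p.1 :: p.2) ^ t :=
    hf.comp_injective (Subtype.val_injective.comp (List.consEquivNeNil (Fin N)).injective)
  have hf_low : Summable fun p : Fin N × List (Fin N) => L ^ t * lipWord S p.2 ^ t :=
    hf_cons.of_nonneg_of_le
      (fun p => mul_nonneg (Real.rpow_nonneg hL t) (Real.rpow_nonneg (lipWord_nonneg _) t)) hcons
  calc N * L ^ t * ∑' w, lipWord S w ^ t
      = ∑' p : Fin N × List (Fin N), L ^ t * lipWord S p.2 ^ t := by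
        simp only [hf_low.tsum_prod' fun _ => hf.mul_left _, tsum_mul_left, tsum_fintype,
          Finset.sum_const, Finset.card_univ, Fintype.card_fin, nsmul_eq_mul, mul_assoc]
    _ ≤ ∑' p : Fin N × List (Fin N), lipWord S (p.1 :: p.2) ^ t :=
        hf_low.tsum_le_tsum hcons hf_cons
    _ = ∑' w : {w : List (Fin N) // w ≠ []}, lipWord S w.1 ^ t :=
        (List.consEquivNeNil (Fin N)).tsum_eq fun w => lipWord S w.1 ^ t
    _ = _ := tsum_congr fun w => by rw [lipWord_of_ne_nil w.2]

end Stopping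

theorem card_stopping_le_general
    {X : Type*} [MetricSpace X]
    {N : ℕ} (S : Fin N → X → X) (hS : ∀ i, IsBiLipContraction (S i))
    (s1 : ℝ) (hs1 : ∑ i, LipPlus (S i) ^ s1 = 1)
    (t : ℝ) (ht : s1 < t)
    (bt : ℝ) (hbt : bt = ∑' w : {w : List (Fin N) // w ≠ []}, LipPlus (compList S w.1) ^ t)
    (Lmin : ℝ) (hLmin : IsLeast {r : ℝ | ∃ i : Fin N, r = LipMinus (S i)} Lmin) :
    ∀ δ : ℝ, 0 < δ → δ ≤ 1 →
      (stopping S δ).Finite ∧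
      (Nat.card (stopping S δ) : ℝ) ≤ bt * Lmin ^ (-t) * δ ^ (-t) := by
  intro δ hδ _
  have hpos (i : Fin N) : 0 < LipPlus (S i) := (hS i).2.2.1.trans_le (hS i).2.2.2.1
  have hlt_one (i : Fin N) : LipPlus (S i) < 1 := (hS i).2.2.2.2
  have ht0 : 0 ≤ t := (nonneg_of_sum_rpow_eq_one hpos hlt_one hs1).trans ht.le
  have hf := summable_lipWord_rpow (fun i => (hS i).1) ht0
    (sum_rpow_lt_one_of_lt hpos hlt_one hs1 ht)
  obtain ⟨⟨i, rfl⟩, hLmin_le⟩ := hLmin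
  have hL : 0 < LipMinus (S i) := (hS i).2.2.1
  have hD := finite_setOf_le_lipWord hf ht0 hδ
  obtain ⟨hfin, hcard⟩ := stopping_finite_and_ncard_le hD
  refine ⟨hfin, ?_⟩
  have hkey := card_mul_rpow_mul_tsum_le hS ht0 hL.le (fun j => hLmin_le ⟨j, rfl⟩) hf
  have hD_sum := hD.ncard_mul_le_tsum hf (fun w => Real.rpow_nonneg (lipWord_nonneg w) t)
    fun w hw => Real.rpow_le_rpow hδ.le hw ht0
  rw [Nat.card_coe_set_eq, Real.rpow_neg hL.le, Real.rpow_neg hδ.le, mul_assoc, ← mul_inv,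
    ← div_eq_mul_inv, le_div_iff₀ (by positivity), hbt]
  calc ((stopping S δ).ncard : ℝ) * (LipMinus (S i) ^ t * δ ^ t)
      ≤ (({u | δ ≤ lipWord S u}.ncard * N : ℕ) : ℝ) * (LipMinus (S i) ^ t * δ ^ t) := by
        gcongr
    _ = N * LipMinus (S i) ^ t * ({u | δ ≤ lipWord S u}.ncard * δ ^ t) := by
        push_cast
        ring
    _ ≤ N * LipMinus (S i) ^ t * ∑' w, lipWord S w ^ t := by gcongr
    _ ≤ _ := hkey

/-- **Lemma 3.4.** If `t > s₁`, then for all `δ ∈ (0,1]`,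
`|I(δ)| ≤ b_t L_min^{-t} δ^{-t}`, where `b_t = ∑_{𝐢∈I*} Lip⁺(S_𝐢)^t` and
`L_min = minᵢ Lip⁻(Sᵢ)`. -/
theorem card_stopping_le
    {X : Type*} [MetricSpace X] [CompactSpace X]
    {N : ℕ} (S : Fin N → X → X) (hS : ∀ i, IsBiLipContraction (S i))
    (s1 : ℝ) (hs1 : ∑ i, LipPlus (S i) ^ s1 = 1)
    (t : ℝ) (ht : s1 < t)
    (bt : ℝ) (hbt : bt = ∑' w : {w : List (Fin N) // w ≠ []}, LipPlus (compList S w.1) ^ t)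
    (Lmin : ℝ) (hLmin : IsLeast {r : ℝ | ∃ i : Fin N, r = LipMinus (S i)} Lmin) :
    ∀ δ : ℝ, 0 < δ → δ ≤ 1 →
      (stopping S δ).Finite ∧
      (Nat.card (stopping S δ) : ℝ) ≤ bt * Lmin ^ (-t) * δ ^ (-t) :=
  card_stopping_le_general S hS s1 hs1 t ht bt hbt Lmin hLmin
end

section
/- Let (X,d) be a compact metric space and 𝕀 = {S_1,...,S_N} an IFS of bi-Lipschitz contractions on X with homogeneous attractor F_∅ and upper Lipschitz dimension s. Then dim̄_B F_∅ ≤ s. -/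
open Metric Filter Set MeasureTheory Topology

/-- `N_δ(F)`: the smallest number of sets of diameter at most `δ` needed to cover `F`. -/
noncomputable def coverNum {X : Type*} [MetricSpace X] (F : Set X) (δ : ℝ) : ℕ :=
  sInf {n : ℕ | ∃ 𝒰 : Finset (Set X), 𝒰.card = n ∧ (∀ U ∈ 𝒰, Metric.diam U ≤ δ) ∧ F ⊆ ⋃₀ ↑𝒰}

/-- Upper box dimension `dim̄_B F = limsup_{δ → 0⁺} log N_δ(F) / (-log δ)`. -/
noncomputable def ubDim {X : Type*} [MetricSpace X] (F : Set X) : ℝ :=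
  Filter.limsup (fun δ : ℝ => Real.log (coverNum F δ) / (-Real.log δ)) (nhdsWithin 0 (Set.Ioi 0))

/-!
Fix `k ≥ 1` and let `L_𝐢 = Lip⁺(S_𝐢)` for `𝐢 ∈ I^k`. Bi-Lipschitz contractions are closed under
composition, so `0 < L_𝐢 < 1`; also `∑ L_𝐢 ^ s_k = 1` and `F_∅ ⊆ ⋃ S_𝐢(F_∅)`. Mapping
`δ / L_𝐢`-covers of `F_∅` by `S_𝐢` gives `N_δ ≤ ∑ N_{δ / L_𝐢}`. The bound `(R / (c δ)) ^ s_k`,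
with `c = min L_𝐢` and `R ≥ diam F_∅`, holds trivially for `δ ≥ R` and is reproduced by this
recursion because `∑ L_𝐢 ^ s_k = 1`; induction on the number of steps, each dividing `δ` by at
most `max L_𝐢 < 1`, gives `N_δ(F_∅) = O(δ ^ (-s_k))`. Hence `dim̄_B F_∅ ≤ s_k`; let `k → ∞`.
-/

section LipschitzConstants

variable {X : Type*} [MetricSpace X] {S : X → X} {c : ℝ}

lemma dist_le_lipPlus_mul (h : ∀ x y, dist (S x) (S y) ≤ c * dist x y) (x y : X) :
    dist (S x) (S y) ≤ LipPlus S * dist x y := by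
  rcases eq_or_ne x y with rfl | hxy
  · simp
  rw [← div_le_iff₀ (dist_pos.2 hxy)]
  refine le_csSup ⟨c, ?_⟩ ⟨x, y, hxy, rfl⟩
  rintro r ⟨x, y, hxy, rfl⟩
  exact (div_le_iff₀ (dist_pos.2 hxy)).2 (h x y)

lemma lipMinus_mul_dist_le (x y : X) : LipMinus S * dist x y ≤ dist (S x) (S y) := by
  rcases eq_or_ne x y with rfl | hxy
  · simp
  rw [← le_div_iff₀ (dist_pos.2 hxy)]
  refine csInf_le ⟨0, ?_⟩ ⟨x, y, hxy, rfl⟩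
  rintro r ⟨x, y, -, rfl⟩
  positivity

lemma lipPlus_le_s12 (hc : 0 ≤ c) (h : ∀ x y, dist (S x) (S y) ≤ c * dist x y) : LipPlus S ≤ c := by
  refine Real.sSup_le ?_ hc
  rintro r ⟨x, y, hxy, rfl⟩
  exact (div_le_iff₀ (dist_pos.2 hxy)).2 (h x y)

lemma le_lipMinus [Nontrivial X] (h : ∀ x y, c * dist x y ≤ dist (S x) (S y)) :
    c ≤ LipMinus S := by
  obtain ⟨x, y, hxy⟩ := exists_pair_ne X
  refine le_csInf ⟨_, x, y, hxy, rfl⟩ ?_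
  rintro r ⟨x, y, hxy, rfl⟩
  exact (le_div_iff₀ (dist_pos.2 hxy)).2 (h x y)

lemma lipMinus_le_lipPlus [Nontrivial X] (h : ∀ x y, dist (S x) (S y) ≤ c * dist x y) :
    LipMinus S ≤ LipPlus S := by
  obtain ⟨x, y, hxy⟩ := exists_pair_ne X
  exact le_of_mul_le_mul_right ((lipMinus_mul_dist_le x y).trans (dist_le_lipPlus_mul h x y))
    (dist_pos.2 hxy)

/-- `LipMinus S` is the infimum of an empty set, hence `0`, on a subsingleton. -/
lemma nontrivial_of_lipMinus_pos (h : 0 < LipMinus S) : Nontrivial X := by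
  by_contra hX
  have hempty : {r : ℝ | ∃ x y : X, x ≠ y ∧ r = dist (S x) (S y) / dist x y} = ∅ :=
    eq_empty_of_forall_notMem fun _ ⟨x, y, hxy, _⟩ => hX ⟨x, y, hxy⟩
  rw [LipMinus, hempty, Real.sInf_empty] at h
  exact lt_irrefl 0 h

lemma IsBiLipContraction.comp {f g : X → X} (hf : IsBiLipContraction f)
    (hg : IsBiLipContraction g) : IsBiLipContraction (f ∘ g) := by
  obtain ⟨hf_le, -, hf_pos, hf_minus_le, hf_lt⟩ := hf
  obtain ⟨hg_le, -, hg_pos, hg_minus_le, hg_lt⟩ := hg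
  have := nontrivial_of_lipMinus_pos hf_pos
  have hf_nonneg : 0 ≤ LipPlus f := (hf_pos.trans_le hf_minus_le).le
  have hg_nonneg : 0 ≤ LipPlus g := (hg_pos.trans_le hg_minus_le).le
  have upper : ∀ x y, dist (f (g x)) (f (g y)) ≤ LipPlus f * LipPlus g * dist x y := by
    intro x y
    calc dist (f (g x)) (f (g y)) ≤ LipPlus f * dist (g x) (g y) := hf_le _ _
      _ ≤ LipPlus f * (LipPlus g * dist x y) := by
          gcongr
          exact hg_le x y
      _ = LipPlus f * LipPlus g * dist x y := by ring
  have lower : ∀ x y, LipMinus f * LipMinus g * dist x y ≤ dist (f (g x)) (f (g y)) := by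
    intro x y
    calc LipMinus f * LipMinus g * dist x y = LipMinus f * (LipMinus g * dist x y) := by ring
      _ ≤ LipMinus f * dist (g x) (g y) := by gcongr; exact lipMinus_mul_dist_le x y
      _ ≤ dist (f (g x)) (f (g y)) := lipMinus_mul_dist_le _ _
  refine ⟨dist_le_lipPlus_mul (S := f ∘ g) upper, lipMinus_mul_dist_le,
    (mul_pos hf_pos hg_pos).trans_le (le_lipMinus (S := f ∘ g) lower),
    lipMinus_le_lipPlus (S := f ∘ g) upper, ?_⟩
  calc LipPlus (f ∘ g) ≤ LipPlus f * LipPlus g :=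
        lipPlus_le_s12 (S := f ∘ g) (mul_nonneg hf_nonneg hg_nonneg) upper
    _ < 1 := mul_lt_one_of_nonneg_of_lt_one_left hf_nonneg hf_lt hg_lt.le

end LipschitzConstants

section Words

variable {X : Type*} {N : ℕ} {S : Fin N → X → X}

lemma isBiLipContraction_compList [MetricSpace X] (hS : ∀ i, IsBiLipContraction (S i)) :
    ∀ {w : List (Fin N)}, w ≠ [] → IsBiLipContraction (compList S w)
  | [i], _ => hS i
  | i :: j :: w, _ => (hS i).comp (isBiLipContraction_compList hS (List.cons_ne_nil j w))

lemma subset_iUnion_compList_image {F : Set X} (hF : F ⊆ ⋃ i, S i '' F) :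
    ∀ k : ℕ, F ⊆ ⋃ w : Fin k → Fin N, compList S (List.ofFn w) '' F
  | 0 => fun x hx => mem_iUnion.2 ⟨Fin.elim0, x, hx, rfl⟩
  | k + 1 => by
    intro x hx
    obtain ⟨i, y, hy, rfl⟩ := mem_iUnion.1 (hF hx)
    obtain ⟨w, z, hz, rfl⟩ := mem_iUnion.1 (subset_iUnion_compList_image hF k hy)
    exact mem_iUnion.2 ⟨Fin.cons i w, z, hz, by simp [List.ofFn_succ, compList]⟩

end Words

section CoveringNumber

variable {X : Type*} [MetricSpace X] {F G : Set X} {δ : ℝ}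

lemma coverNum_le_card {𝒰 : Finset (Set X)} (h𝒰 : ∀ U ∈ 𝒰, diam U ≤ δ) (hF : F ⊆ ⋃₀ ↑𝒰) :
    coverNum F δ ≤ 𝒰.card :=
  Nat.sInf_le ⟨𝒰, rfl, h𝒰, hF⟩

lemma coverNum_le_one (h : diam F ≤ δ) : coverNum F δ ≤ 1 := by
  simpa using coverNum_le_card (𝒰 := {F}) (by simpa using h) (by simp)

variable [CompactSpace X]

lemma exists_cover_card_eq_coverNum (F : Set X) (hδ : 0 < δ) :
    ∃ 𝒰 : Finset (Set X), 𝒰.card = coverNum F δ ∧ (∀ U ∈ 𝒰, diam U ≤ δ) ∧ F ⊆ ⋃₀ ↑𝒰 := by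
  classical
  show coverNum F δ ∈ {n : ℕ | ∃ 𝒰 : Finset (Set X), 𝒰.card = n ∧ (∀ U ∈ 𝒰, diam U ≤ δ) ∧
    F ⊆ ⋃₀ ↑𝒰}
  refine Nat.sInf_mem ?_
  obtain ⟨t, -, ht, hcov⟩ := isCompact_univ.finite_cover_balls (X := X) (half_pos hδ)
  refine ⟨_, ht.toFinset.image (ball · (δ / 2)), rfl, ?_, ?_⟩
  · simp only [Finset.mem_image]
    rintro _ ⟨x, -, rfl⟩
    simpa [mul_div_cancel₀] using diam_ball (x := x) (half_pos hδ).le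
  · intro x _
    simpa [sUnion_image] using hcov (mem_univ x)

lemma one_le_coverNum (hF : F.Nonempty) (hδ : 0 < δ) : 1 ≤ coverNum F δ := by
  obtain ⟨𝒰, h𝒰, -, hcov⟩ := exists_cover_card_eq_coverNum F hδ
  obtain ⟨U, hU, -⟩ := hcov hF.some_mem
  exact h𝒰 ▸ Finset.card_pos.2 ⟨U, hU⟩

lemma coverNum_mono (hFG : F ⊆ G) (hδ : 0 < δ) : coverNum F δ ≤ coverNum G δ := by
  obtain ⟨𝒰, h𝒰, hdiam, hcov⟩ := exists_cover_card_eq_coverNum G hδ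
  exact h𝒰 ▸ coverNum_le_card hdiam (hFG.trans hcov)

lemma coverNum_iUnion_le {ι : Type*} [Fintype ι] (F : ι → Set X) (hδ : 0 < δ) :
    coverNum (⋃ i, F i) δ ≤ ∑ i, coverNum (F i) δ := by
  classical
  choose 𝒰 h𝒰 hdiam hcov using fun i => exists_cover_card_eq_coverNum (F i) hδ
  calc coverNum (⋃ i, F i) δ ≤ (Finset.univ.biUnion 𝒰).card := by
        refine coverNum_le_card ?_ (iUnion_subset fun i => (hcov i).trans (sUnion_mono ?_))
        · simp only [Finset.mem_biUnion]
          rintro U ⟨i, -, hU⟩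
          exact hdiam i U hU
        · exact_mod_cast Finset.subset_biUnion_of_mem 𝒰 (Finset.mem_univ i)
    _ ≤ ∑ i, (𝒰 i).card := Finset.card_biUnion_le
    _ = ∑ i, coverNum (F i) δ := by simp only [h𝒰]

lemma coverNum_image_le {T : X → X} {L : ℝ} (hL : 0 ≤ L)
    (hT : ∀ x y, dist (T x) (T y) ≤ L * dist x y) (hδ : 0 < δ) :
    coverNum (T '' F) (L * δ) ≤ coverNum F δ := by
  classical
  obtain ⟨𝒰, h𝒰, hdiam, hcov⟩ := exists_cover_card_eq_coverNum F hδ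
  have hT' : LipschitzWith ⟨L, hL⟩ T := LipschitzWith.of_dist_le_mul hT
  calc coverNum (T '' F) (L * δ) ≤ (𝒰.image (T '' ·)).card := by
        refine coverNum_le_card ?_ ?_
        · simp only [Finset.mem_image]
          rintro _ ⟨U, hU, rfl⟩
          calc diam (T '' U) ≤ L * diam U := hT'.diam_image_le U isBounded_of_compactSpace
            _ ≤ L * δ := by gcongr; exact hdiam U hU
        · rw [Finset.coe_image, sUnion_image]
          rintro _ ⟨x, hx, rfl⟩
          obtain ⟨U, hU, hxU⟩ := hcov hx
          exact mem_biUnion hU (mem_image_of_mem T hxU)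
    _ ≤ 𝒰.card := Finset.card_image_le
    _ = coverNum F δ := h𝒰

lemma coverNum_le_sum_coverNum_div {ι : Type*} [Fintype ι] {T : ι → X → X} {L : ι → ℝ}
    (hF : F ⊆ ⋃ w, T w '' F) (hT : ∀ w x y, dist (T w x) (T w y) ≤ L w * dist x y)
    (hL : ∀ w, 0 < L w) (hδ : 0 < δ) :
    coverNum F δ ≤ ∑ w, coverNum F (δ / L w) :=
  calc coverNum F δ ≤ coverNum (⋃ w, T w '' F) δ := coverNum_mono hF hδ
    _ ≤ ∑ w, coverNum (T w '' F) δ := coverNum_iUnion_le _ hδ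
    _ ≤ ∑ w, coverNum F (δ / L w) := Finset.sum_le_sum fun w _ => by
        simpa only [mul_div_cancel₀ δ (hL w).ne'] using
          coverNum_image_le (hL w).le (hT w) (div_pos hδ (hL w))

end CoveringNumber

lemma nonneg_of_sum_rpow_eq_one_s12 {ι : Type*} [Fintype ι] {L : ι → ℝ} {t : ℝ}
    (hL0 : ∀ i, 0 < L i) (hL1 : ∀ i, L i < 1) (hsum : ∑ i, L i ^ t = 1) : 0 ≤ t := by
  by_contra! ht
  obtain ⟨i, -, -⟩ := Finset.exists_ne_zero_of_sum_ne_zero (hsum ▸ one_ne_zero)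
  have := Finset.single_le_sum (fun j _ => (Real.rpow_pos_of_pos (hL0 j) t).le)
    (Finset.mem_univ i)
  linarith [Real.one_lt_rpow_of_pos_of_lt_one_of_neg (hL0 i) (hL1 i) ht]

section BoxDimension

variable {X : Type*} [MetricSpace X] [CompactSpace X] {F : Set X}

theorem ubDim_le_of_coverNum_le_rpow (hF : F.Nonempty) {C t : ℝ}
    (h : ∀ᶠ δ in 𝓝[>] 0, (coverNum F δ : ℝ) ≤ C * δ ^ (-t)) : ubDim F ≤ t := by
  have hsmall : ∀ᶠ δ in 𝓝[>] (0 : ℝ), δ ∈ Ioo 0 1 := Ioo_mem_nhdsGT one_pos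
  have hv : Tendsto (fun δ => t + Real.log C / (-Real.log δ)) (𝓝[>] 0) (𝓝 t) := by
    simpa using tendsto_const_nhds.add (tendsto_const_nhds.div_atTop
      (tendsto_neg_atBot_atTop.comp Real.tendsto_log_nhdsGT_zero))
  calc ubDim F ≤ limsup (fun δ => t + Real.log C / (-Real.log δ)) (𝓝[>] 0) := by
        refine limsup_le_limsup ?_ ?_ hv.isBoundedUnder_le
        · filter_upwards [h, hsmall] with δ hδ ⟨hδ0, hδ1⟩
          have hlog : 0 < -Real.log δ := neg_pos.2 (Real.log_neg hδ0 hδ1)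
          have hN : (1 : ℝ) ≤ coverNum F δ := by exact_mod_cast one_le_coverNum hF hδ0
          have hC : C ≠ 0 := by rintro rfl; linarith [zero_mul (δ ^ (-t))]
          rw [div_le_iff₀ hlog]
          calc Real.log (coverNum F δ) ≤ Real.log (C * δ ^ (-t)) := Real.log_le_log (by linarith) hδ
            _ = Real.log C + -t * Real.log δ := by
                rw [Real.log_mul hC (Real.rpow_pos_of_pos hδ0 _).ne', Real.log_rpow hδ0]
            _ = (t + Real.log C / (-Real.log δ)) * (-Real.log δ) := by
                rw [add_mul, div_mul_cancel₀ _ hlog.ne']; ring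
        · refine isCoboundedUnder_le_of_eventually_le _ (x := 0) ?_
          filter_upwards [hsmall] with δ ⟨hδ0, hδ1⟩
          exact div_nonneg (Real.log_natCast_nonneg _) (neg_nonneg.2 (Real.log_nonpos hδ0.le hδ1.le))
    _ = t := hv.limsup_eq

variable {ι : Type*} [Fintype ι] {T : ι → X → X} {L : ι → ℝ}

theorem coverNum_le_rpow_of_subset_iUnion_image (hF : F ⊆ ⋃ w, T w '' F)
    (hT : ∀ w x y, dist (T w x) (T w y) ≤ L w * dist x y) {c r t R : ℝ} (hc : 0 < c)
    (hcL : ∀ w, c ≤ L w) (hLr : ∀ w, L w ≤ r) (hr : r < 1) (ht : 0 ≤ t)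
    (hsum : ∑ w, L w ^ t = 1) (hFR : diam F ≤ R) {δ : ℝ} (hδ : 0 < δ) (hδR : δ ≤ R / c) :
    (coverNum F δ : ℝ) ≤ (R / (c * δ)) ^ t := by
  have hR : 0 < R := (div_pos_iff_of_pos_right hc).1 (hδ.trans_le hδR)
  have hL : ∀ w, 0 < L w := fun w => hc.trans_le (hcL w)
  have large : ∀ δ, 0 < δ → R ≤ δ → δ ≤ R / c → (coverNum F δ : ℝ) ≤ (R / (c * δ)) ^ t := by
    intro δ hδ hRδ hδR
    have : 1 ≤ R / (c * δ) := by
      rw [le_div_iff₀ (mul_pos hc hδ), one_mul, mul_comm, ← le_div_iff₀ hc]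
      exact hδR
    calc (coverNum F δ : ℝ) ≤ 1 := by exact_mod_cast coverNum_le_one (hFR.trans hRδ)
      _ ≤ (R / (c * δ)) ^ t := Real.one_le_rpow this ht
  obtain ⟨n, hn⟩ := exists_pow_lt_of_lt_one (div_pos hδ hR) hr
  rw [lt_div_iff₀ hR] at hn
  induction n generalizing δ with
  | zero => exact large δ hδ (by simpa using hn.le) hδR
  | succ n ih =>
    rcases le_or_gt R δ with hRδ | hδR'
    · exact large δ hδ hRδ hδR
    have step : ∀ w, (coverNum F (δ / L w) : ℝ) ≤ (R / (c * δ)) ^ t * L w ^ t := by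
      intro w
      rw [← Real.mul_rpow (by positivity) (hL w).le,
        show R / (c * δ) * L w = R / (c * (δ / L w)) by field_simp]
      refine ih (div_pos hδ (hL w)) ?_ ?_
      · rw [div_le_div_iff₀ (hL w) hc]
        nlinarith [hcL w]
      · rw [lt_div_iff₀ (hL w)]
        have hr0 : 0 ≤ r := (hL w).le.trans (hLr w)
        calc r ^ n * R * L w ≤ r ^ n * R * r := by gcongr; exact hLr w
          _ = r ^ (n + 1) * R := by ring
          _ < δ := hn
    calc (coverNum F δ : ℝ) ≤ ∑ w, (coverNum F (δ / L w) : ℝ) := by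
          exact_mod_cast coverNum_le_sum_coverNum_div hF hT hL hδ
      _ ≤ ∑ w, (R / (c * δ)) ^ t * L w ^ t := Finset.sum_le_sum fun w _ => step w
      _ = (R / (c * δ)) ^ t := by rw [← Finset.mul_sum, hsum, mul_one]

theorem ubDim_le_of_subset_iUnion_image (hF0 : F.Nonempty) (hF : F ⊆ ⋃ w, T w '' F)
    (hT : ∀ w x y, dist (T w x) (T w y) ≤ L w * dist x y) (hL0 : ∀ w, 0 < L w)
    (hL1 : ∀ w, L w < 1) {t : ℝ} (hsum : ∑ w, L w ^ t = 1) : ubDim F ≤ t := by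
  obtain ⟨i, -, -⟩ := Finset.exists_ne_zero_of_sum_ne_zero (hsum ▸ one_ne_zero)
  have : Nonempty ι := ⟨i⟩
  obtain ⟨wmin, hmin⟩ := Finite.exists_min L
  obtain ⟨wmax, hmax⟩ := Finite.exists_max L
  have ht := nonneg_of_sum_rpow_eq_one_s12 hL0 hL1 hsum
  have hR : 0 < diam F + 1 := by linarith [diam_nonneg (s := F)]
  refine ubDim_le_of_coverNum_le_rpow hF0 (C := ((diam F + 1) / L wmin) ^ t) ?_
  filter_upwards [Ioc_mem_nhdsGT (div_pos hR (hL0 wmin))] with δ ⟨hδ, hδR⟩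
  calc (coverNum F δ : ℝ) ≤ ((diam F + 1) / (L wmin * δ)) ^ t :=
        coverNum_le_rpow_of_subset_iUnion_image hF hT (hL0 wmin) hmin hmax (hL1 wmax) ht hsum
          (by linarith) hδ hδR
    _ = ((diam F + 1) / L wmin) ^ t * δ ^ (-t) := by
        rw [Real.rpow_neg hδ.le, ← div_eq_mul_inv, ← Real.div_rpow (div_pos hR (hL0 wmin)).le hδ.le,
          div_div]

end BoxDimension

theorem upper_box_dim_homogeneous_attractor_le_general
    {X : Type*} [MetricSpace X] [CompactSpace X]
    {N : ℕ} (S : Fin N → X → X) (hS : ∀ i, IsBiLipContraction (S i))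
    (F0 : Set X) (hF0ne : F0.Nonempty)
    (hF0 : F0 = ⋃ i, S i '' F0)
    (sk : ℕ → ℝ)
    (hsk : ∀ k, 1 ≤ k → ∑ w : Fin k → Fin N, LipPlus (compList S (List.ofFn w)) ^ sk k = 1)
    (s : ℝ) (hs : Filter.Tendsto sk Filter.atTop (𝓝 s)) :
    ubDim F0 ≤ s := by
  refine ge_of_tendsto hs (eventually_atTop.2 ⟨1, fun k hk => ?_⟩)
  have hT (w : Fin k → Fin N) : IsBiLipContraction (compList S (List.ofFn w)) :=
    isBiLipContraction_compList hS (mt List.ofFn_eq_nil_iff.1 (by omega))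
  exact ubDim_le_of_subset_iUnion_image hF0ne (subset_iUnion_compList_image hF0.le k)
    (fun w => (hT w).1) (fun w => (hT w).2.2.1.trans_le (hT w).2.2.2.1)
    (fun w => (hT w).2.2.2.2) (hsk k hk)

/-- **Lemma 3.5.** The upper box dimension of the homogeneous attractor is bounded above by
the upper Lipschitz dimension: `dim̄_B F_∅ ≤ s`. -/
theorem upper_box_dim_homogeneous_attractor_le
    {X : Type*} [MetricSpace X] [CompactSpace X]
    {N : ℕ} (S : Fin N → X → X) (hS : ∀ i, IsBiLipContraction (S i))
    (F0 : Set X) (hF0c : IsCompact F0) (hF0ne : F0.Nonempty)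
    (hF0 : F0 = ⋃ i, S i '' F0)
    (sk : ℕ → ℝ)
    (hsk : ∀ k, 1 ≤ k → ∑ w : Fin k → Fin N, LipPlus (compList S (List.ofFn w)) ^ sk k = 1)
    (s : ℝ) (hs : Filter.Tendsto sk Filter.atTop (𝓝 s)) :
    ubDim F0 ≤ s :=
  upper_box_dim_homogeneous_attractor_le_general S hS F0 hF0ne hF0 sk hsk s hs
end

section
/- Let (X,d) be a compact metric space, 𝕀 = {S_1,...,S_N} an IFS of contractions on X and C ⊆ X compact with ℋ^s(C) < ∞ for some s ≥ 0. Then for all K ∈ ℕ and all integers 1 ≤ a, b ≤ K: ℋ^s(⋃_{n=0}^∞ ⋃_{𝐢∈I^{a+nK}} S_𝐢(C)) < ∞ if and only if ℋ^s(⋃_{n=0}^∞ ⋃_{𝐢∈I^{b+nK}} S_𝐢(C)) < ∞. -/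
open Metric Filter Set MeasureTheory Topology

/-- `S` is a contraction: Lipschitz with some constant `c < 1`. -/
def IsContractionMap {X : Type*} [MetricSpace X] (S : X → X) : Prop :=
  ∃ c : ℝ, 0 ≤ c ∧ c < 1 ∧ ∀ x y : X, dist (S x) (S y) ≤ c * dist x y

open scoped ENNReal NNReal

/-!
Write `U_m(E) = ⋃_{|𝐢| = m} S_𝐢(E)` (`levelImage S E m`). Since `U_{d+m}(C) = U_d(U_m(C))` and `U_d` is a finite union
of Lipschitz images, `U_d` preserves finiteness of `ℋ^s`; so finiteness for the residue class of
`a` passes to the class of `a + d` for every `d`. Taking `d = b + K - a` reaches every level of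
the class of `b` except the first, and `U_b(C)` itself has finite measure.
-/

section Words

variable {X : Type*} {N : ℕ} (S : Fin N → X → X)

lemma compList_append (l₁ l₂ : List (Fin N)) :
    compList S (l₁ ++ l₂) = compList S l₁ ∘ compList S l₂ := by
  induction l₁ with
  | nil => rfl
  | cons i l ih => simp only [List.cons_append, compList, ih, Function.comp_assoc]

def levelImage (E : Set X) (m : ℕ) : Set X :=
  ⋃ w : Fin m → Fin N, compList S (List.ofFn w) '' E

lemma levelImage_add (E : Set X) (d m : ℕ) :
    levelImage S E (d + m) = levelImage S (levelImage S E m) d := by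
  simp only [levelImage, image_iUnion, ← image_comp, ← compList_append, ← List.ofFn_fin_append]
  apply Subset.antisymm
  · refine iUnion_subset fun u => ?_
    rw [← Fin.append_castAdd_natAdd (f := u)]
    exact subset_iUnion₂_of_subset _ _ subset_rfl
  · exact iUnion₂_subset fun v w => subset_iUnion_of_subset _ subset_rfl

lemma levelImage_iUnion {ι : Type*} (E : ι → Set X) (m : ℕ) :
    levelImage S (⋃ i, E i) m = ⋃ i, levelImage S (E i) m := by
  simp only [levelImage, image_iUnion]
  exact iUnion_comm _

end Words

section Lipschitz

variable {X : Type*} [MetricSpace X] {N : ℕ} {S : Fin N → X → X}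

lemma IsContractionMap.lipschitzWith_one {f : X → X} (hf : IsContractionMap f) :
    LipschitzWith 1 f := by
  obtain ⟨c, -, hc1, hf⟩ := hf
  refine LipschitzWith.of_dist_le_mul fun x y => (hf x y).trans ?_
  rw [NNReal.coe_one]
  exact mul_le_mul_of_nonneg_right hc1.le dist_nonneg

lemma lipschitzWith_compList {K : ℝ≥0} (hS : ∀ i, LipschitzWith K (S i)) (l : List (Fin N)) :
    LipschitzWith (K ^ l.length) (compList S l) := by
  induction l with
  | nil => exact LipschitzWith.id
  | cons i l ih => simpa only [compList, List.length_cons, pow_succ'] using (hS i).comp ih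

variable [MeasurableSpace X] [BorelSpace X]

lemma hausdorffMeasure_levelImage_lt_top {K : ℝ≥0} (hS : ∀ i, LipschitzWith K (S i)) {s : ℝ}
    (hs : 0 ≤ s) {E : Set X} (hE : μH[s] E < ⊤) (m : ℕ) : μH[s] (levelImage S E m) < ⊤ := by
  refine (measure_iUnion_fintype_le _ _).trans_lt (ENNReal.sum_lt_top.2 fun w _ => ?_)
  refine ((lipschitzWith_compList hS _).hausdorffMeasure_image_le hs E).trans_lt ?_
  exact ENNReal.mul_lt_top (ENNReal.rpow_lt_top_of_nonneg hs ENNReal.coe_ne_top) hE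

lemma hausdorffMeasure_residueClass_lt_top_of_le {K : ℝ≥0} (hS : ∀ i, LipschitzWith K (S i))
    {s : ℝ} (hs : 0 ≤ s) {C : Set X} (hC : μH[s] C < ⊤) {k a b : ℕ} (hab : a ≤ b + k)
    (ha : μH[s] (⋃ n : ℕ, levelImage S C (a + n * k)) < ⊤) :
    μH[s] (⋃ n : ℕ, levelImage S C (b + n * k)) < ⊤ := by
  have hshift : ⋃ n : ℕ, levelImage S C (b + (n + 1) * k) =
      levelImage S (⋃ n : ℕ, levelImage S C (a + n * k)) (b + k - a) := by
    rw [levelImage_iUnion]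
    refine iUnion_congr fun n => ?_
    rw [← levelImage_add]
    congr 1
    rw [add_mul, one_mul]
    omega
  rw [← union_iUnion_nat_succ, measure_union_lt_top_iff]
  simp only [zero_mul, add_zero]
  rw [hshift]
  exact ⟨hausdorffMeasure_levelImage_lt_top hS hs hC b,
    hausdorffMeasure_levelImage_lt_top hS hs ha _⟩

end Lipschitz

theorem hausdorff_measure_residue_classes_finite_iff_general
    {X : Type*} [MetricSpace X] [MeasurableSpace X] [BorelSpace X]
    {N : ℕ} (S : Fin N → X → X) (hS : ∀ i, IsContractionMap (S i))
    (C : Set X)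
    (s : ℝ) (hs0 : 0 ≤ s) (hsC : μH[s] C < ⊤) :
    ∀ K : ℕ, ∀ a b : ℕ, 1 ≤ a → a ≤ K → 1 ≤ b → b ≤ K →
      (μH[s] (⋃ n : ℕ, ⋃ w : Fin (a + n * K) → Fin N, compList S (List.ofFn w) '' C) < ⊤ ↔
        μH[s] (⋃ n : ℕ, ⋃ w : Fin (b + n * K) → Fin N, compList S (List.ofFn w) '' C) < ⊤) := by
  intro K a b _ haK _ hbK
  have hS₁ : ∀ i, LipschitzWith 1 (S i) := fun i => (hS i).lipschitzWith_one
  exact ⟨hausdorffMeasure_residueClass_lt_top_of_le hS₁ hs0 hsC (by omega),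
    hausdorffMeasure_residueClass_lt_top_of_le hS₁ hs0 hsC (by omega)⟩

/-- **Lemma 4.1.** If `ℋ^s(C) < ∞`, then for all `K ∈ ℕ` and `1 ≤ a, b ≤ K`,
`ℋ^s(⋃_{n≥0} ⋃_{𝐢 ∈ I^{a+nK}} S_𝐢(C)) < ∞ ↔ ℋ^s(⋃_{n≥0} ⋃_{𝐢 ∈ I^{b+nK}} S_𝐢(C)) < ∞`. -/
theorem hausdorff_measure_residue_classes_finite_iff
    {X : Type*} [MetricSpace X] [CompactSpace X] [MeasurableSpace X] [BorelSpace X]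
    {N : ℕ} (S : Fin N → X → X) (hS : ∀ i, IsContractionMap (S i))
    (C : Set X) (hCc : IsCompact C)
    (s : ℝ) (hs0 : 0 ≤ s) (hsC : μH[s] C < ⊤) :
    ∀ K : ℕ, ∀ a b : ℕ, 1 ≤ a → a ≤ K → 1 ≤ b → b ≤ K →
      (μH[s] (⋃ n : ℕ, ⋃ w : Fin (a + n * K) → Fin N, compList S (List.ofFn w) '' C) < ⊤ ↔
        μH[s] (⋃ n : ℕ, ⋃ w : Fin (b + n * K) → Fin N, compList S (List.ofFn w) '' C) < ⊤) :=
  hausdorff_measure_residue_classes_finite_iff_general S hS C s hs0 hsC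
end
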